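/- Context Irrelevance: for all world evaluation contexts C and C', every redex base rdx, and all global method tables M_g, M_g': (1) ⟨M_g, C[rdx]⟩ → ⟨M_g', C[e']⟩ if and only if ⟨M_g, C'[rdx]⟩ → ⟨M_g', C'[e']⟩; and (2) ⟨M_g, C[rdx]⟩ → error if and only if ⟨M_g, C'[rdx]⟩ → error. -/

import Mathlib

namespace Juliette

/-- Type tags. -/
inductive Tag where
  | unit
  | fn (m : String)
  | int
deriving DecidableEq

/-- Type annotations: tags plus the top annotation `Any`. -/
inductive Ty where
  | any
  | tag (σ : Tag)
deriving DecidableEq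

/-- Values: unit, function values, and base (integer) values. -/
inductive Val where
  | unit
  | fn (m : String)
  | int (n : Int)
deriving DecidableEq

def Val.typeof : Val → Tag
  | .unit => .unit
  | .fn m => .fn m
  | .int _ => .int

/-- Subtyping on annotations: τ <: Any, and tags are subtypes iff equal. -/
def Ty.sub : Ty → Ty → Bool
  | _, .any => true
  | .any, .tag _ => false
  | .tag σ₁, .tag σ₂ => σ₁ == σ₂

/-- Juliette expressions.  A method table is a list of method definitions
    (name, parameters with annotations, body); the head of the list is the
    newest definition. -/
inductive Expr where
  | val (v : Val)
  | var (x : String)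
  | seq (e₁ e₂ : Expr)
  | primCall (δ : String) (args : List Expr)
  | call (f : Expr) (args : List Expr)
  | mdef (m : String) (params : List (String × Ty)) (body : Expr)
  | evalGlobal (e : Expr)
  | evalLocal (tbl : List (String × List (String × Ty) × Expr)) (e : Expr)

/-- Method definitions and method tables. -/
abbrev MDef := String × List (String × Ty) × Expr
abbrev Table := List MDef

def MDef.toExpr (md : MDef) : Expr := .mdef md.1 md.2.1 md.2.2

def MDef.tys (md : MDef) : List Ty := md.2.1.map Prod.snd

-- Method names referenced by an expression.
mutual
def Expr.refs : Expr → List String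
  | .val (.fn m) => [m]
  | .val _ => []
  | .var _ => []
  | .seq e₁ e₂ => e₁.refs ++ e₂.refs
  | .primCall _ es => Expr.refsList es
  | .call f es => f.refs ++ Expr.refsList es
  | .mdef m _ b => m :: b.refs
  | .evalGlobal e => e.refs
  | .evalLocal tbl e => Expr.refsTbl tbl ++ e.refs

def Expr.refsList : List Expr → List String
  | [] => []
  | e :: es => e.refs ++ Expr.refsList es

def Expr.refsTbl : List (String × List (String × Ty) × Expr) → List String
  | [] => []
  | (m, _, b) :: rest => m :: (b.refs ++ Expr.refsTbl rest)
end

-- Substitution of expressions for variables.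
mutual
def Expr.subst (ρ : String → Option Expr) : Expr → Expr
  | .val v => .val v
  | .var x => (ρ x).getD (.var x)
  | .seq e₁ e₂ => .seq (e₁.subst ρ) (e₂.subst ρ)
  | .primCall δ es => .primCall δ (Expr.substList ρ es)
  | .call f es => .call (f.subst ρ) (Expr.substList ρ es)
  | .mdef m ps b =>
      .mdef m ps (b.subst (fun x => if ps.any (fun p => p.1 == x) then none else ρ x))
  | .evalGlobal e => .evalGlobal (e.subst ρ)
  | .evalLocal tbl e => .evalLocal tbl (e.subst ρ)

def Expr.substList (ρ : String → Option Expr) : List Expr → List Expr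
  | [] => []
  | e :: es => e.subst ρ :: Expr.substList ρ es
end
/-- σ̄ <: τ̄ pointwise (with matching lengths). -/
def subTags (σs : List Tag) (τs : List Ty) : Bool :=
  σs.length == τs.length && (σs.zip τs).all (fun p => Ty.sub (.tag p.1) p.2)

def subTys (a b : List Ty) : Bool :=
  a.length == b.length && (a.zip b).all (fun p => p.1.sub p.2)

def tysEquiv (a b : List Ty) : Bool := subTys a b && subTys b a

/-- A newer definition shadows an older one with the same name and
    pairwise-equivalent argument annotations. -/
def shadows (newer older : MDef) : Bool :=
  newer.1 == older.1 && tysEquiv newer.tys older.tys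

/-- Un-shadowed definitions of a table (head is newest). -/
def latest : Table → List MDef
  | [] => []
  | md :: rest => md :: (latest rest).filter (fun md' => !(shadows md md'))

def applicable (mds : List MDef) (m : String) (σs : List Tag) : List MDef :=
  mds.filter (fun md => md.1 == m && subTags σs md.tys)

/-- Method dispatch: the most specific applicable un-shadowed method,
    `none` on dispatch error. -/
def getmd (M : Table) (m : String) (σs : List Tag) : Option MDef :=
  let app := applicable (latest M) m σs
  app.find? (fun md => app.all (fun md' => subTys md.tys md'.tys))

/-- Simple evaluation contexts. -/
inductive SCtx where
  | hole
  | seq (X : SCtx) (e : Expr)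
  | primArg (δ : String) (vs : List Val) (X : SCtx) (es : List Expr)
  | callee (X : SCtx) (es : List Expr)
  | callArg (v : Val) (vs : List Val) (X : SCtx) (es : List Expr)

def SCtx.plug : SCtx → Expr → Expr
  | .hole, e => e
  | .seq X e₂, e => .seq (X.plug e) e₂
  | .primArg δ vs X es, e => .primCall δ (vs.map Expr.val ++ X.plug e :: es)
  | .callee X es, e => .call (X.plug e) es
  | .callArg v vs X es, e => .call (.val v) (vs.map Expr.val ++ X.plug e :: es)

/-- World evaluation contexts: C ::= X | X[⦅C⦆] | X[⟨C⟩_M]. -/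
inductive WCtx where
  | simple (X : SCtx)
  | evalG (X : SCtx) (C : WCtx)
  | evalL (X : SCtx) (M : Table) (C : WCtx)

def WCtx.plug : WCtx → Expr → Expr
  | .simple X, e => X.plug e
  | .evalG X C, e => X.plug (.evalGlobal (C.plug e))
  | .evalL X M C, e => X.plug (.evalLocal M (C.plug e))

/-- Composition of simple contexts: (X₁.comp X₂)[e] = X₁[X₂[e]]. -/
def SCtx.comp : SCtx → SCtx → SCtx
  | .hole, X₂ => X₂
  | .seq X e, X₂ => .seq (X.comp X₂) e
  | .primArg δ vs X es, X₂ => .primArg δ vs (X.comp X₂) es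
  | .callee X es, X₂ => .callee (X.comp X₂) es
  | .callArg v vs X es, X₂ => .callArg v vs (X.comp X₂) es

/-- Wrapping a world context in an outer simple frame: C.under F = F[C]. -/
def WCtx.under : WCtx → SCtx → WCtx
  | .simple X, F => .simple (F.comp X)
  | .evalG X C, F => .evalG (F.comp X) C
  | .evalL X M C, F => .evalL (F.comp X) M C

/-- Composition of world contexts: (C₁.comp C₂)[e] = C₁[C₂[e]]. -/
def WCtx.comp : WCtx → WCtx → WCtx
  | .simple X, C₂ => C₂.under X
  | .evalG X C₁, C₂ => .evalG X (C₁.comp C₂)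
  | .evalL X M C₁, C₂ => .evalL X M (C₁.comp C₂)

/-- A generic function call m(v̄). -/
def mkCall (m : String) (vs : List Val) : Expr := .call (.val (.fn m)) (vs.map Expr.val)

/-- Redex bases. -/
inductive Redex where
  | var (x : String)
  | seqV (v : Val) (e : Expr)
  | primC (δ : String) (vs : List Val)
  | callNonFn (v : Val) (vs : List Val) (h : ∀ m, v ≠ .fn m)
  | mdefR (m : String) (ps : List (String × Ty)) (b : Expr)
  | globalVal (v : Val)
  | localVal (M : Table) (v : Val)
  | globalCall (X : SCtx) (m : String) (vs : List Val)
  | localCall (M : Table) (X : SCtx) (m : String) (vs : List Val)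

def Redex.toExpr : Redex → Expr
  | .var x => .var x
  | .seqV v e => .seq (.val v) e
  | .primC δ vs => .primCall δ (vs.map Expr.val)
  | .callNonFn v vs _ => .call (.val v) (vs.map Expr.val)
  | .mdefR m ps b => .mdef m ps b
  | .globalVal v => .evalGlobal (.val v)
  | .localVal M v => .evalLocal M (.val v)
  | .globalCall X m vs => .evalGlobal (X.plug (mkCall m vs))
  | .localCall M X m vs => .evalLocal M (X.plug (mkCall m vs))

/-- Environment binding formal parameters to argument expressions. -/
def bindArgs (ps : List (String × Ty)) (args : List Expr) : String → Option Expr :=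
  fun x => ((ps.map Prod.fst).zip args).lookup x

/-- The small-step relation ⟨M, e⟩ → ⟨M', e'⟩, parameterized by the
    interpretation Δ of primitive operators. -/
inductive Step (Δ : String → List Val → Option Val) : Table → Expr → Table → Expr → Prop where
  | seqStep (M : Table) (C : WCtx) (v : Val) (e : Expr) :
      Step Δ M (C.plug (.seq (.val v) e)) M (C.plug e)
  | primStep {δ : String} {vs : List Val} {v' : Val} (M : Table) (C : WCtx)
      (h : Δ δ vs = some v') :
      Step Δ M (C.plug (.primCall δ (vs.map Expr.val))) M (C.plug (.val v'))
  | mdefStep (M : Table) (C : WCtx) (m : String) (ps : List (String × Ty)) (b : Expr) :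
      Step Δ M (C.plug (.mdef m ps b)) ((m, ps, b) :: M) (C.plug (.val (.fn m)))
  | callGlobal (M : Table) (C : WCtx) (X : SCtx) (m : String) (vs : List Val) :
      Step Δ M (C.plug (.evalGlobal (X.plug (mkCall m vs)))) M
               (C.plug (.evalGlobal (X.plug (.evalLocal M (mkCall m vs)))))
  | callLocal {M' : Table} {m : String} {vs : List Val} {md : MDef}
      (M : Table) (C : WCtx) (X : SCtx)
      (h : getmd M' m (vs.map Val.typeof) = some md) :
      Step Δ M (C.plug (.evalLocal M' (X.plug (mkCall m vs)))) M
               (C.plug (.evalLocal M' (X.plug (md.2.2.subst (bindArgs md.2.1 (vs.map Expr.val))))))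
  | valGlobal (M : Table) (C : WCtx) (v : Val) :
      Step Δ M (C.plug (.evalGlobal (.val v))) M (C.plug (.val v))
  | valLocal (M M' : Table) (C : WCtx) (v : Val) :
      Step Δ M (C.plug (.evalLocal M' (.val v))) M (C.plug (.val v))

/-- The error step ⟨M, e⟩ → error. -/
inductive StepErr (Δ : String → List Val → Option Val) : Table → Expr → Prop where
  | varErr (M : Table) (C : WCtx) (x : String) :
      StepErr Δ M (C.plug (.var x))
  | primErr {δ : String} {vs : List Val} (M : Table) (C : WCtx)
      (h : Δ δ vs = none) :
      StepErr Δ M (C.plug (.primCall δ (vs.map Expr.val)))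
  | calleeErr {v : Val} (M : Table) (C : WCtx) (vs : List Val)
      (h : ∀ m, v ≠ Val.fn m) :
      StepErr Δ M (C.plug (.call (.val v) (vs.map Expr.val)))
  | callErr {M' : Table} {m : String} {vs : List Val} (M : Table) (C : WCtx) (X : SCtx)
      (h : getmd M' m (vs.map Val.typeof) = none) :
      StepErr Δ M (C.plug (.evalLocal M' (X.plug (mkCall m vs))))

/-- Reflexive-transitive closure of the small-step relation. -/
inductive Steps (Δ : String → List Val → Option Val) : Table → Expr → Table → Expr → Prop where
  | refl (M : Table) (e : Expr) : Steps Δ M e M e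
  | tail {M e M' e' M'' e''} : Steps Δ M e M' e' → Step Δ M' e' M'' e'' → Steps Δ M e M'' e''
/-- Canonical representations. -/
inductive Rep where
  | V (v : Val)
  | X (X : SCtx)
  | C (C : WCtx)

/-- The canonical-form judgment Can(e, rep). -/
inductive Can : Expr → Rep → Prop where
  | val (v : Val) : Can (.val v) (.V v)
  | call (m : String) (vs : List Val) : Can (mkCall m vs) (.X .hole)
  | redex (r : Redex) : Can r.toExpr (.C (.simple .hole))
  | seqX {e₁ : Expr} {X₁ : SCtx} (e₂ : Expr) :
      Can e₁ (.X X₁) → Can (.seq e₁ e₂) (.X (.seq X₁ e₂))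
  | primX {eᵢ : Expr} {Xᵢ : SCtx} (δ : String) (vs : List Val) (es : List Expr) :
      Can eᵢ (.X Xᵢ) →
      Can (.primCall δ (vs.map Expr.val ++ eᵢ :: es)) (.X (.primArg δ vs Xᵢ es))
  | calleeX {e_c : Expr} {X_c : SCtx} (es : List Expr) :
      Can e_c (.X X_c) → Can (.call e_c es) (.X (.callee X_c es))
  | callX {eᵢ : Expr} {Xᵢ : SCtx} (m : String) (vs : List Val) (es : List Expr) :
      Can eᵢ (.X Xᵢ) →
      Can (.call (.val (.fn m)) (vs.map Expr.val ++ eᵢ :: es))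
          (.X (.callArg (.fn m) vs Xᵢ es))
  | seqC {e₁ : Expr} {C₁ : WCtx} (e₂ : Expr) :
      Can e₁ (.C C₁) → Can (.seq e₁ e₂) (.C (C₁.under (.seq .hole e₂)))
  | primC {eᵢ : Expr} {Cᵢ : WCtx} (δ : String) (vs : List Val) (es : List Expr) :
      Can eᵢ (.C Cᵢ) →
      Can (.primCall δ (vs.map Expr.val ++ eᵢ :: es)) (.C (Cᵢ.under (.primArg δ vs .hole es)))
  | calleeC {e_c : Expr} {C_c : WCtx} (es : List Expr) :
      Can e_c (.C C_c) → Can (.call e_c es) (.C (C_c.under (.callee .hole es)))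
  | callC {eᵢ : Expr} {Cᵢ : WCtx} (m : String) (vs : List Val) (es : List Expr) :
      Can eᵢ (.C Cᵢ) →
      Can (.call (.val (.fn m)) (vs.map Expr.val ++ eᵢ :: es))
          (.C (Cᵢ.under (.callArg (.fn m) vs .hole es)))
  | evalGC {e : Expr} {C : WCtx} :
      Can e (.C C) → Can (.evalGlobal e) (.C (.evalG .hole C))
  | evalLC {e : Expr} {C : WCtx} (M : Table) :
      Can e (.C C) → Can (.evalLocal M e) (.C (.evalL .hole M C))
/-- Typing environments map variables to type annotations. -/
abbrev TyEnv := String → Option Ty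

def emptyEnv : TyEnv := fun _ => none

/-- Concrete typing Γ ⊢ e : σ, parameterized by the return-tag function Δτ
    of primitive operators. -/
inductive HasTy (Δτ : String → List Tag → Option Tag) : TyEnv → Expr → Tag → Prop where
  | var {Γ : TyEnv} {x : String} {σ : Tag} :
      Γ x = some (.tag σ) → HasTy Δτ Γ (.var x) σ
  | val {Γ : TyEnv} (v : Val) : HasTy Δτ Γ (.val v) v.typeof
  | mdefTy {Γ : TyEnv} (m : String) (ps : List (String × Ty)) (b : Expr) :
      HasTy Δτ Γ (.mdef m ps b) (.fn m)
  | seq {Γ : TyEnv} {e₂ : Expr} {σ : Tag} (e₁ : Expr) :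
      HasTy Δτ Γ e₂ σ → HasTy Δτ Γ (.seq e₁ e₂) σ
  | primop {Γ : TyEnv} {δ : String} {es : List Expr} {σs : List Tag} {σ' : Tag} :
      es.length = σs.length →
      (∀ p ∈ es.zip σs, HasTy Δτ Γ p.1 p.2) →
      Δτ δ σs = some σ' →
      HasTy Δτ Γ (.primCall δ es) σ'
  | evalG {Γ : TyEnv} {e : Expr} {σ : Tag} :
      HasTy Δτ Γ e σ → HasTy Δτ Γ (.evalGlobal e) σ
  | evalL {Γ : TyEnv} {e : Expr} {σ : Tag} (M : Table) :
      HasTy Δτ Γ e σ → HasTy Δτ Γ (.evalLocal M e) σ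

/-- Δτ agrees with Δ: the tag of a primop's result is given by Δτ. -/
def Agrees (Δ : String → List Val → Option Val)
    (Δτ : String → List Tag → Option Tag) : Prop :=
  ∀ δ vs v', Δ δ vs = some v' → Δτ δ (vs.map Val.typeof) = some v'.typeof

/-- m is the name of some method defined in M. -/
def nameInTable (m : String) (M : Table) : Prop := ∃ md ∈ M, md.1 = m

/-- m occurs in M: either as a defined name or referenced in some body. -/
def occursInTable (m : String) (M : Table) : Prop :=
  ∃ md ∈ M, md.1 = m ∨ m ∈ Expr.refs md.2.2

/-- Every method name referenced by e occurs in M iff it occurs in M'. -/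
def compat (e : Expr) (M M' : Table) : Prop :=
  ∀ m ∈ e.refs, (nameInTable m M ↔ nameInTable m M')

/-- Method-optimization environments: entries m[σ̄] ≡ m'. -/
abbrev OptEnv := List (String × List Tag × String)

/-- Near-values: values or variables. -/
inductive NearVal where
  | val (v : Val)
  | var (x : String)

def NearVal.toExpr : NearVal → Expr
  | .val v => .val v
  | .var x => .var x

/-- Typing environment x̄ : τ̄ from a parameter list. -/
def paramEnv (ps : List (String × Ty)) : TyEnv := fun x => ps.lookup x

/-- Typing environment x̄ : σ̄ binding parameter names to tags. -/
def tagEnv (ps : List (String × Ty)) (σs : List Tag) : TyEnv :=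
  fun x => ((ps.map Prod.fst).zip (σs.map Ty.tag)).lookup x

/-- Renaming substitution [x̄' := x̄] from the parameters of one definition
    to those of another. -/
def renameEnv (fromPs toPs : List (String × Ty)) : String → Option Expr :=
  fun x => ((fromPs.map Prod.fst).zip ((toPs.map Prod.fst).map Expr.var)).lookup x

/-- Expression optimization Φ; Γ ⊢ M, e ↝ M', e'. -/
inductive Opt (Δτ : String → List Tag → Option Tag) (Φ : OptEnv) (M M' : Table) :
    TyEnv → Expr → Expr → Prop where
  | valNonFn {Γ : TyEnv} {v : Val} (h : ∀ m, v ≠ Val.fn m) :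
      Opt Δτ Φ M M' Γ (.val v) (.val v)
  | valFn {Γ : TyEnv} (m : String) (h : compat (.val (.fn m)) M M') :
      Opt Δτ Φ M M' Γ (.val (.fn m)) (.val (.fn m))
  | var {Γ : TyEnv} (x : String) : Opt Δτ Φ M M' Γ (.var x) (.var x)
  | evalG {Γ : TyEnv} (e : Expr) (h : compat e M M') :
      Opt Δτ Φ M M' Γ (.evalGlobal e) (.evalGlobal e)
  | evalL {Γ : TyEnv} (Ml : Table) (e : Expr) (h : compat e M M') :
      Opt Δτ Φ M M' Γ (.evalLocal Ml e) (.evalLocal Ml e)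
  | mdefO {Γ : TyEnv} (m : String) (ps : List (String × Ty)) (b : Expr)
      (h : compat (.val (.fn m)) M M') :
      Opt Δτ Φ M M' Γ (.mdef m ps b) (.mdef m ps b)
  | seq {Γ : TyEnv} {e₁ e₁' e₂ e₂' : Expr} :
      Opt Δτ Φ M M' Γ e₁ e₁' → Opt Δτ Φ M M' Γ e₂ e₂' →
      Opt Δτ Φ M M' Γ (.seq e₁ e₂) (.seq e₁' e₂')
  | primop {Γ : TyEnv} {es es' : List Expr} (δ : String) :
      es.length = es'.length →
      (∀ p ∈ es.zip es', Opt Δτ Φ M M' Γ p.1 p.2) →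
      Opt Δτ Φ M M' Γ (.primCall δ es) (.primCall δ es')
  | call {Γ : TyEnv} {e_c e_c' : Expr} {es es' : List Expr} :
      Opt Δτ Φ M M' Γ e_c e_c' →
      es.length = es'.length →
      (∀ p ∈ es.zip es', Opt Δτ Φ M M' Γ p.1 p.2) →
      Opt Δτ Φ M M' Γ (.call e_c es) (.call e_c' es')
  | inline {Γ : TyEnv} {m : String} {νs : List NearVal} {σs : List Tag}
      {md : MDef} {e' : Expr} :
      νs.length = σs.length →
      (∀ p ∈ νs.zip σs, HasTy Δτ Γ p.1.toExpr p.2) →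
      getmd M m σs = some md →
      Opt Δτ Φ M M' Γ (md.2.2.subst (bindArgs md.2.1 (νs.map NearVal.toExpr))) e' →
      Opt Δτ Φ M M' Γ (.call (.val (.fn m)) (νs.map NearVal.toExpr))
                      (.seq (.val .unit) e')
  | direct {Γ : TyEnv} {m m' : String} {es es' : List Expr} {σs : List Tag} :
      es.length = es'.length →
      es'.length = σs.length →
      (∀ p ∈ es.zip es', Opt Δτ Φ M M' Γ p.1 p.2) →
      (∀ p ∈ es'.zip σs, HasTy Δτ Γ p.1 p.2) →
      (m, σs, m') ∈ Φ →
      Opt Δτ Φ M M' Γ (.call (.val (.fn m)) es) (.call (.val (.fn m')) es')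

/-- md' optimizes md under (Φ, M, M'): same name and annotations, and the
    new body (with parameters renamed back) optimizes the old body. -/
def mdOpt (Δτ : String → List Tag → Option Tag) (Φ : OptEnv) (M M' : Table)
    (md md' : MDef) : Prop :=
  md'.1 = md.1 ∧ md'.tys = md.tys ∧ md.2.1.length = md'.2.1.length ∧
  Opt Δτ Φ M M' (paramEnv md.2.1) md.2.2 (md'.2.2.subst (renameEnv md'.2.1 md.2.1))

/-- Validity of an entry m[σ̄] ≡ m' of Φ for (Φ, M, M'). -/
def validEntry (Δτ : String → List Tag → Option Tag) (Φ : OptEnv) (M M' : Table)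
    (ent : String × List Tag × String) : Prop :=
  ∃ md md' : MDef,
    getmd M ent.1 ent.2.1 = some md ∧
    getmd M' ent.2.2 ent.2.1 = some md' ∧
    md.2.1.length = md'.2.1.length ∧
    Opt Δτ Φ M M' (tagEnv md.2.1 ent.2.1) md.2.2 (md'.2.2.subst (renameEnv md'.2.1 md.2.1))

/-- Table optimization Φ ⊢ M ↝ M'. -/
def TableOpt (Δτ : String → List Tag → Option Tag) (Φ : OptEnv) (M M' : Table) : Prop :=
  ∃ extra opts : Table,
    M' = extra ++ opts ∧
    List.Forall₂ (mdOpt Δτ Φ M M') M opts ∧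
    (∀ ent ∈ Φ, validEntry Δτ Φ M M' ent) ∧
    (∀ md ∈ extra, ¬ occursInTable md.1 M)

/-- Φ ⊢ e : M ↝ M'. -/
def TableOptE (Δτ : String → List Tag → Option Tag) (Φ : OptEnv) (e : Expr)
    (M M' : Table) : Prop :=
  TableOpt Δτ Φ M M' ∧ compat e M M'

/-- Γ ⊢ γ ok for a value substitution γ. -/
def substOk (Γ : TyEnv) (γ : String → Option Val) : Prop :=
  (∀ x, (Γ x).isSome ↔ (γ x).isSome) ∧
  (∀ x σ, Γ x = some (Ty.tag σ) ↔ ∃ v, γ x = some v ∧ v.typeof = σ)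

/-- Application of a value substitution to an expression. -/
def applySubst (γ : String → Option Val) (e : Expr) : Expr :=
  e.subst (fun x => (γ x).map Expr.val)

/-!
Every rule of `Step` and `StepErr` has the shape `C[rdx] → C[e₀]` with a premise about the
redex base `rdx` alone, so it suffices that an expression decomposes as `C[rdx]` in at most one
way. A redex base is an atom, i.e. all its evaluation positions hold values, and simple contexts
decompose atoms uniquely. For world contexts one adds that `C[rdx]` is never a value nor a
pending call `X[m(v̄)]`, which are the only contents a box `⦅·⦆` or `⟨·⟩_M` can have as a redex
base; hence a box around `C[rdx]` is never itself a redex base.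
-/

namespace Expr

/-- The expressions that can fill the hole of a simple evaluation context: non-values whose
evaluation positions already hold values. -/
def IsAtom : Expr → Prop
  | .val _ => False
  | .seq e _ => ∃ v, e = .val v
  | .primCall _ es => ∃ vs : List Val, es = vs.map .val
  | .call f es => (∃ v, f = .val v) ∧ ∃ vs : List Val, es = vs.map .val
  | _ => True

end Expr

theorem _root_.List.append_cons_inj_of_notMem_prefix {α : Type*} {x₁ x₂ z₁ z₂ : List α}
    {a₁ a₂ : α} (h₁ : a₁ ∉ x₂) (h₂ : a₂ ∉ x₁) (h : x₁ ++ a₁ :: z₁ = x₂ ++ a₂ :: z₂) :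
    x₁ = x₂ ∧ a₁ = a₂ ∧ z₁ = z₂ := by
  induction x₁ generalizing x₂ with
  | nil =>
    cases x₂ with
    | nil => simpa using h
    | cons c x₂ =>
      simp only [List.nil_append, List.cons_append, List.cons.injEq] at h
      exact absurd (h.1 ▸ List.mem_cons_self) h₁
  | cons b x₁ ih =>
    cases x₂ with
    | nil =>
      simp only [List.nil_append, List.cons_append, List.cons.injEq] at h
      exact absurd (h.1 ▸ List.mem_cons_self) h₂
    | cons c x₂ =>
      simp only [List.cons_append, List.cons.injEq] at h
      obtain ⟨rfl, h⟩ := h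
      obtain ⟨rfl, rfl, rfl⟩ := ih (fun h => h₁ (List.mem_cons_of_mem _ h))
        (fun h => h₂ (List.mem_cons_of_mem _ h)) h
      exact ⟨rfl, rfl, rfl⟩

theorem map_val_append_cons_inj {vs vs' : List Val} {x x' : Expr} {es es' : List Expr}
    (hx : x ∉ vs'.map Expr.val) (hx' : x' ∉ vs.map Expr.val)
    (h : vs.map Expr.val ++ x :: es = vs'.map Expr.val ++ x' :: es') :
    vs = vs' ∧ x = x' ∧ es = es' := by
  obtain ⟨hvs, rfl, rfl⟩ := List.append_cons_inj_of_notMem_prefix hx hx' h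
  exact ⟨List.map_injective_iff.mpr (fun _ _ => Expr.val.inj) hvs, rfl, rfl⟩

namespace SCtx

theorem plug_injective (X : SCtx) : Function.Injective X.plug := by
  induction X with
  | hole => exact fun _ _ h => h
  | seq X e ih | callee X e ih => exact fun _ _ h => ih (by simp_all [plug])
  | primArg δ vs X es ih | callArg _ vs X es ih => exact fun _ _ h => ih (by simp_all [plug])

theorem plug_ne_val (X : SCtx) {a : Expr} (ha : a.IsAtom) (v : Val) : X.plug a ≠ .val v := by
  intro h
  cases X <;> simp only [plug, reduceCtorEq] at h
  subst h
  exact ha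

theorem plug_notMem_map_val (X : SCtx) {a : Expr} (ha : a.IsAtom) (vs : List Val) :
    X.plug a ∉ vs.map Expr.val := by
  simpa using fun v _ => (X.plug_ne_val ha v).symm

theorem eq_hole_of_isAtom_plug {X : SCtx} {a : Expr} (ha : a.IsAtom) (hX : (X.plug a).IsAtom) :
    X = .hole := by
  cases X with
  | hole => rfl
  | seq X e => exact absurd hX.choose_spec (X.plug_ne_val ha _)
  | callee X e => exact absurd hX.1.choose_spec (X.plug_ne_val ha _)
  | primArg δ vs X es =>
    obtain ⟨ws, hws⟩ := hX
    exact absurd (hws ▸ List.mem_append_right _ List.mem_cons_self) (X.plug_notMem_map_val ha ws)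
  | callArg _ vs X es =>
    obtain ⟨-, ws, hws⟩ := hX
    exact absurd (hws ▸ List.mem_append_right _ List.mem_cons_self) (X.plug_notMem_map_val ha ws)

theorem plug_eq_plug_of_isAtom {X X' : SCtx} {a a' : Expr} (ha : a.IsAtom) (ha' : a'.IsAtom)
    (h : X.plug a = X'.plug a') : X = X' ∧ a = a' := by
  induction X generalizing X' with
  | hole =>
    obtain rfl := eq_hole_of_isAtom_plug ha' (h ▸ ha : (X'.plug a').IsAtom)
    exact ⟨rfl, h⟩
  | seq X e ih =>
    cases X' with
    | hole => exact absurd (eq_hole_of_isAtom_plug (X := .seq X e) ha (h ▸ ha')) nofun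
    | seq Y e' =>
      obtain ⟨hX, rfl⟩ := Expr.seq.inj h
      obtain ⟨rfl, rfl⟩ := ih hX
      exact ⟨rfl, rfl⟩
    | _ => nomatch h
  | callee X es ih =>
    cases X' with
    | hole => exact absurd (eq_hole_of_isAtom_plug (X := .callee X es) ha (h ▸ ha')) nofun
    | callee Y es' =>
      obtain ⟨hX, rfl⟩ := Expr.call.inj h
      obtain ⟨rfl, rfl⟩ := ih hX
      exact ⟨rfl, rfl⟩
    | callArg v vs Y es' => exact absurd (Expr.call.inj h).1 (X.plug_ne_val ha v)
    | _ => nomatch h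
  | primArg δ vs X es ih =>
    cases X' with
    | hole => exact absurd (eq_hole_of_isAtom_plug (X := .primArg δ vs X es) ha (h ▸ ha')) nofun
    | primArg δ' vs' Y es' =>
      obtain ⟨rfl, hargs⟩ := Expr.primCall.inj h
      obtain ⟨rfl, hX, rfl⟩ := map_val_append_cons_inj (X.plug_notMem_map_val ha _)
        (Y.plug_notMem_map_val ha' _) hargs
      obtain ⟨rfl, rfl⟩ := ih hX
      exact ⟨rfl, rfl⟩
    | _ => nomatch h
  | callArg v vs X es ih =>
    cases X' with
    | hole => exact absurd (eq_hole_of_isAtom_plug (X := .callArg v vs X es) ha (h ▸ ha')) nofun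
    | callee Y es' => exact absurd (Expr.call.inj h).1.symm (Y.plug_ne_val ha' v)
    | callArg v' vs' Y es' =>
      obtain ⟨hv, hargs⟩ := Expr.call.inj h
      obtain ⟨rfl⟩ := Expr.val.inj hv
      obtain ⟨rfl, hX, rfl⟩ := map_val_append_cons_inj (X.plug_notMem_map_val ha _)
        (Y.plug_notMem_map_val ha' _) hargs
      obtain ⟨rfl, rfl⟩ := ih hX
      exact ⟨rfl, rfl⟩
    | _ => nomatch h

end SCtx

theorem isAtom_mkCall (m : String) (vs : List Val) : (mkCall m vs).IsAtom :=
  ⟨⟨_, rfl⟩, vs, rfl⟩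

theorem Redex.isAtom_toExpr (r : Redex) : r.toExpr.IsAtom := by
  cases r <;> first | trivial | exact ⟨_, rfl⟩ | exact ⟨⟨_, rfl⟩, _, rfl⟩

namespace WCtx

theorem plug_injective (C : WCtx) : Function.Injective C.plug := by
  induction C with
  | simple X => exact X.plug_injective
  | evalG X C ih => exact fun _ _ h => ih (Expr.evalGlobal.inj (X.plug_injective h))
  | evalL X M C ih => exact fun _ _ h => ih (Expr.evalLocal.inj (X.plug_injective h)).2

theorem plug_redex_ne_val (C : WCtx) (r : Redex) (v : Val) : C.plug r.toExpr ≠ .val v := by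
  cases C with
  | simple X => exact X.plug_ne_val r.isAtom_toExpr v
  | evalG X C | evalL X _ C => exact X.plug_ne_val (by trivial) v

theorem plug_redex_ne_plug_mkCall (C : WCtx) (r : Redex) (X : SCtx) (m : String)
    (vs : List Val) : C.plug r.toExpr ≠ X.plug (mkCall m vs) := by
  intro h
  cases C with
  | simple Y =>
    obtain ⟨-, hr⟩ := SCtx.plug_eq_plug_of_isAtom r.isAtom_toExpr (isAtom_mkCall m vs) h
    cases r <;> simp only [Redex.toExpr, mkCall, Expr.call.injEq, reduceCtorEq] at hr
    case callNonFn hv => exact hv m (Expr.val.inj hr.1)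
  | evalG Y C | evalL Y _ C =>
    obtain ⟨-, hr⟩ := SCtx.plug_eq_plug_of_isAtom (by trivial) (isAtom_mkCall m vs) h
    nomatch hr

end WCtx

namespace Redex

theorem toExpr_ne_evalGlobal_plug (r r' : Redex) (C : WCtx) :
    r.toExpr ≠ .evalGlobal (C.plug r'.toExpr) := by
  intro h
  cases r <;> simp only [toExpr, Expr.evalGlobal.injEq, reduceCtorEq] at h
  case globalVal v => exact C.plug_redex_ne_val r' v h.symm
  case globalCall X m vs => exact C.plug_redex_ne_plug_mkCall r' X m vs h.symm

theorem toExpr_ne_evalLocal_plug (r r' : Redex) (M : Table) (C : WCtx) :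
    r.toExpr ≠ .evalLocal M (C.plug r'.toExpr) := by
  intro h
  cases r <;> simp only [toExpr, Expr.evalLocal.injEq, reduceCtorEq] at h
  case localVal v => exact C.plug_redex_ne_val r' v h.2.symm
  case localCall X m vs => exact C.plug_redex_ne_plug_mkCall r' X m vs h.2.symm

end Redex

theorem WCtx.plug_redex_inj {C C' : WCtx} {r r' : Redex}
    (h : C.plug r.toExpr = C'.plug r'.toExpr) : C = C' ∧ r.toExpr = r'.toExpr := by
  have hr := r.isAtom_toExpr
  have hr' := r'.isAtom_toExpr
  induction C generalizing C' with
  | simple X =>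
    cases C' with
    | simple X' =>
      obtain ⟨rfl, he⟩ := SCtx.plug_eq_plug_of_isAtom hr hr' h
      exact ⟨rfl, he⟩
    | evalG X' C' =>
      obtain ⟨-, he⟩ := SCtx.plug_eq_plug_of_isAtom hr (by trivial) h
      exact absurd he (r.toExpr_ne_evalGlobal_plug r' C')
    | evalL X' M' C' =>
      obtain ⟨-, he⟩ := SCtx.plug_eq_plug_of_isAtom hr (by trivial) h
      exact absurd he (r.toExpr_ne_evalLocal_plug r' M' C')
  | evalG X C ih =>
    cases C' with
    | simple X' =>
      obtain ⟨-, he⟩ := SCtx.plug_eq_plug_of_isAtom (by trivial) hr' h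
      exact absurd he.symm (r'.toExpr_ne_evalGlobal_plug r C)
    | evalG X' C' =>
      obtain ⟨rfl, hbox⟩ := SCtx.plug_eq_plug_of_isAtom (by trivial) (by trivial) h
      obtain ⟨rfl, he⟩ := ih (Expr.evalGlobal.inj hbox)
      exact ⟨rfl, he⟩
    | evalL X' M' C' =>
      obtain ⟨-, he⟩ := SCtx.plug_eq_plug_of_isAtom (by trivial) (by trivial) h
      nomatch he
  | evalL X M C ih =>
    cases C' with
    | simple X' =>
      obtain ⟨-, he⟩ := SCtx.plug_eq_plug_of_isAtom (by trivial) hr' h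
      exact absurd he.symm (r'.toExpr_ne_evalLocal_plug r M C)
    | evalG X' C' =>
      obtain ⟨-, he⟩ := SCtx.plug_eq_plug_of_isAtom (by trivial) (by trivial) h
      nomatch he
    | evalL X' M' C' =>
      obtain ⟨rfl, hbox⟩ := SCtx.plug_eq_plug_of_isAtom (by trivial) (by trivial) h
      obtain ⟨rfl, hC⟩ := Expr.evalLocal.inj hbox
      obtain ⟨rfl, he⟩ := ih hC
      exact ⟨rfl, he⟩

inductive HeadStep (Δ : String → List Val → Option Val) :
    Table → Redex → Table → Expr → Prop where
  | seq (M : Table) (v : Val) (e : Expr) : HeadStep Δ M (.seqV v e) M e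
  | prim {δ : String} {vs : List Val} {v' : Val} (M : Table) (h : Δ δ vs = some v') :
      HeadStep Δ M (.primC δ vs) M (.val v')
  | mdef (M : Table) (m : String) (ps : List (String × Ty)) (b : Expr) :
      HeadStep Δ M (.mdefR m ps b) ((m, ps, b) :: M) (.val (.fn m))
  | callGlobal (M : Table) (X : SCtx) (m : String) (vs : List Val) :
      HeadStep Δ M (.globalCall X m vs) M
        (.evalGlobal (X.plug (.evalLocal M (mkCall m vs))))
  | callLocal {M' : Table} {m : String} {vs : List Val} {md : MDef} (M : Table) (X : SCtx)
      (h : getmd M' m (vs.map Val.typeof) = some md) :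
      HeadStep Δ M (.localCall M' X m vs) M
        (.evalLocal M' (X.plug (md.2.2.subst (bindArgs md.2.1 (vs.map Expr.val)))))
  | valGlobal (M : Table) (v : Val) : HeadStep Δ M (.globalVal v) M (.val v)
  | valLocal (M M' : Table) (v : Val) : HeadStep Δ M (.localVal M' v) M (.val v)

inductive HeadErr (Δ : String → List Val → Option Val) : Redex → Prop where
  | var (x : String) : HeadErr Δ (.var x)
  | prim {δ : String} {vs : List Val} (h : Δ δ vs = none) : HeadErr Δ (.primC δ vs)
  | callNonFn (v : Val) (vs : List Val) (h : ∀ m, v ≠ Val.fn m) :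
      HeadErr Δ (.callNonFn v vs h)
  | callLocal {M' : Table} {m : String} {vs : List Val} (X : SCtx)
      (h : getmd M' m (vs.map Val.typeof) = none) :
      HeadErr Δ (.localCall M' X m vs)

section

variable {Δ : String → List Val → Option Val}

theorem step_iff_exists_headStep {M M' : Table} {e e' : Expr} :
    Step Δ M e M' e' ↔
      ∃ (C : WCtx) (r : Redex) (e₀ : Expr),
        HeadStep Δ M r M' e₀ ∧ e = C.plug r.toExpr ∧ e' = C.plug e₀ := by
  constructor
  · rintro (⟨M, C, v, e⟩ | ⟨M, C, h⟩ | ⟨M, C, m, ps, b⟩ | ⟨M, C, X, m, vs⟩ | ⟨M, C, X, h⟩ |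
      ⟨M, C, v⟩ | ⟨M, M', C, v⟩)
    · exact ⟨C, _, _, .seq M v e, rfl, rfl⟩
    · exact ⟨C, _, _, .prim M h, rfl, rfl⟩
    · exact ⟨C, _, _, .mdef M m ps b, rfl, rfl⟩
    · exact ⟨C, _, _, .callGlobal M X m vs, rfl, rfl⟩
    · exact ⟨C, _, _, .callLocal M X h, rfl, rfl⟩
    · exact ⟨C, _, _, .valGlobal M v, rfl, rfl⟩
    · exact ⟨C, _, _, .valLocal M M' v, rfl, rfl⟩
  · rintro ⟨C, r, e₀, hr, rfl, rfl⟩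
    cases hr
    · exact .seqStep _ C _ _
    · exact .primStep _ C ‹_›
    · exact .mdefStep _ C _ _ _
    · exact .callGlobal _ C _ _ _
    · exact .callLocal _ C _ ‹_›
    · exact .valGlobal _ C _
    · exact .valLocal _ _ C _

theorem stepErr_iff_exists_headErr {M : Table} {e : Expr} :
    StepErr Δ M e ↔ ∃ (C : WCtx) (r : Redex), HeadErr Δ r ∧ e = C.plug r.toExpr := by
  constructor
  · rintro (⟨M, C, x⟩ | ⟨M, C, h⟩ | ⟨M, C, vs, h⟩ | ⟨M, C, X, h⟩)
    · exact ⟨C, _, .var x, rfl⟩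
    · exact ⟨C, _, .prim h, rfl⟩
    · exact ⟨C, _, .callNonFn _ vs h, rfl⟩
    · exact ⟨C, _, .callLocal X h, rfl⟩
  · rintro ⟨C, r, hr, rfl⟩
    cases hr
    · exact .varErr _ C _
    · exact .primErr _ C ‹_›
    · exact .calleeErr _ C _ ‹_›
    · exact .callErr _ C _ ‹_›

theorem Step.change_context {M M' : Table} {C : WCtx} {r : Redex} {e' : Expr}
    (hs : Step Δ M (C.plug r.toExpr) M' (C.plug e')) (C' : WCtx) :
    Step Δ M (C'.plug r.toExpr) M' (C'.plug e') := by
  obtain ⟨D, r₀, e₀, hr₀, hD, he⟩ := step_iff_exists_headStep.1 hs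
  obtain ⟨rfl, hr⟩ := WCtx.plug_redex_inj hD
  rw [C.plug_injective he, hr]
  exact step_iff_exists_headStep.2 ⟨C', r₀, e₀, hr₀, rfl, rfl⟩

theorem StepErr.change_context {M : Table} {C : WCtx} {r : Redex}
    (hs : StepErr Δ M (C.plug r.toExpr)) (C' : WCtx) : StepErr Δ M (C'.plug r.toExpr) := by
  obtain ⟨D, r₀, hr₀, hD⟩ := stepErr_iff_exists_headErr.1 hs
  rw [(WCtx.plug_redex_inj hD).2]
  exact stepErr_iff_exists_headErr.2 ⟨C', r₀, hr₀, rfl⟩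

end

/-- Context Irrelevance. -/
theorem context_irrelevance (Δ : String → List Val → Option Val)
    (C C' : WCtx) (r : Redex) (Mg Mg' : Table) :
    (∀ e' : Expr,
        Step Δ Mg (C.plug r.toExpr) Mg' (C.plug e') ↔
        Step Δ Mg (C'.plug r.toExpr) Mg' (C'.plug e')) ∧
    (StepErr Δ Mg (C.plug r.toExpr) ↔ StepErr Δ Mg (C'.plug r.toExpr)) :=
  ⟨fun _ => ⟨(·.change_context C'), (·.change_context C)⟩,
    ⟨(·.change_context C'), (·.change_context C)⟩⟩

end Juliette
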